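/- Let α : ℝ → ℝ be strictly increasing with α(0) = 0 (an extended class-K function), and let h : [0,∞) → ℝ be differentiable with h(0) ≥ 0 and h′(t) ≥ −α(h(t)) for all t ≥ 0. Then h(t) ≥ 0 for all t ≥ 0; that is, the safe set {t : h(t) ≥ 0} is forward invariant. -/

import Mathlib

/-!
If `h` became negative at some time `t`, let `s ≤ t` be the last time with `h s ≥ 0`.
On `(s, t]` we have `h < 0`, so `α (h) < α 0 = 0` and the CBF condition forces `h' > 0`;
hence `h` is strictly increasing on `[s, t]` and `h t > h s ≥ 0`.
-/

open Set

theorem exists_last_nonneg_of_continuousOn {h : ℝ → ℝ} {a b : ℝ} (hab : a ≤ b)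
    (hcont : ContinuousOn h (Icc a b)) (ha : 0 ≤ h a) :
    ∃ s ∈ Icc a b, 0 ≤ h s ∧ ∀ x ∈ Ioc s b, h x < 0 := by
  have hK : IsCompact (Icc a b ∩ h ⁻¹' Ici 0) :=
    isCompact_Icc.of_isClosed_subset
      (hcont.preimage_isClosed_of_isClosed isClosed_Icc isClosed_Ici) inter_subset_left
  obtain ⟨s, ⟨hs, hhs⟩, hmax⟩ := hK.exists_isGreatest ⟨a, left_mem_Icc.2 hab, ha⟩
  refine ⟨s, hs, hhs, fun x hx => ?_⟩
  by_contra! hx0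
  exact hx.1.not_ge (hmax ⟨⟨hs.1.trans hx.1.le, hx.2⟩, hx0⟩)

theorem nonneg_of_deriv_pos_of_neg {h : ℝ → ℝ} {a b : ℝ} (hab : a ≤ b)
    (hcont : ContinuousOn h (Icc a b)) (ha : 0 ≤ h a)
    (hderiv : ∀ x ∈ Ioo a b, h x < 0 → 0 < deriv h x) : 0 ≤ h b := by
  obtain ⟨s, hs, hhs, hneg⟩ := exists_last_nonneg_of_continuousOn hab hcont ha
  rcases hs.2.eq_or_lt with rfl | hsb
  · exact hhs
  have hmono : StrictMonoOn h (Icc s b) := by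
    refine strictMonoOn_of_deriv_pos (convex_Icc s b) (hcont.mono (Icc_subset_Icc_left hs.1))
      fun x hx => ?_
    rw [interior_Icc] at hx
    exact hderiv x ⟨hs.1.trans_lt hx.1, hx.2⟩ (hneg x (Ioo_subset_Ioc_self hx))
  exact hhs.trans (hmono (left_mem_Icc.2 hsb.le) (right_mem_Icc.2 hsb.le) hsb).le

/-- Forward invariance of the safe set under the CBF condition:
if `α` is an extended class-K function (strictly increasing, `α 0 = 0`), `h` is
differentiable with `h 0 ≥ 0` and `h' t ≥ -α (h t)` for all `t ≥ 0`, then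
`h t ≥ 0` for all `t ≥ 0`. -/
theorem cbf_forward_invariance
    (α : ℝ → ℝ) (hα_mono : StrictMono α) (hα0 : α 0 = 0)
    (h : ℝ → ℝ) (hdiff : ∀ t, 0 ≤ t → DifferentiableAt ℝ h t)
    (h0 : 0 ≤ h 0)
    (hcbf : ∀ t, 0 ≤ t → -α (h t) ≤ deriv h t) :
    ∀ t, 0 ≤ t → 0 ≤ h t := by
  intro t ht
  have hcont : ContinuousOn h (Icc 0 t) := fun x hx =>
    (hdiff x hx.1).continuousAt.continuousWithinAt
  refine nonneg_of_deriv_pos_of_neg ht hcont h0 fun x hx hneg => ?_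
  have hα_neg : α (h x) < 0 := hα0 ▸ hα_mono hneg
  linarith [hcbf x hx.1.le]
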